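/- Fix d ≥ 1, 1 ≤ k ≤ d, α ∈ [0,1/2], and let 𝒬_{d,k,α} be the family of distributions Q_{d,t,b,α}(x) = (1 + 2αb·(∏_{i∈t} x_i)·x_{d+1})·2^{−d−1} on {±1}^{d+1} for t ⊆ [d], |t| ≤ k, b ∈ {±1}. Then for every f : {±1}^{d+1} → [−1,1], the average over the family of (E_{x∼Q}[f(x)] − E_{x∼U}[f(x)])² is at most 4α²/C(d,≤k), i.e., ‖𝒬_{d,k,α}‖²_{∞→2} ≤ 4α²/C(d,≤k). -/
import Mathlib


open Finset

noncomputable def sgn (b : Bool) : ℝ := if b then 1 else -1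

noncomputable def Qd (d : ℕ) (t : Finset (Fin d)) (b : Bool) (α : ℝ)
    (x : Fin (d + 1) → Bool) : ℝ :=
  (1 + 2 * α * sgn b * (∏ i ∈ t, sgn (x i.castSucc)) * sgn (x (Fin.last d))) /
    2 ^ (d + 1)

lemma sgn_mul_self (b : Bool) : sgn b * sgn b = 1 := by
  cases b <;> simp [sgn]

lemma sgn_mul_sgn (a b : Bool) : sgn a * sgn b = if a = b then 1 else -1 := by
  cases a <;> cases b <;> norm_num [sgn]

lemma sum_prod_sgn (n : ℕ) (x y : Fin n → Bool) :
    ∑ S : Finset (Fin n), ∏ i ∈ S, (sgn (x i) * sgn (y i)) =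
      if x = y then (2 : ℝ) ^ n else 0 := by
  have h := Finset.prod_add (fun i : Fin n => sgn (x i) * sgn (y i))
    (fun _ : Fin n => (1:ℝ)) Finset.univ
  simp only [Finset.prod_const_one, mul_one] at h
  have huniv : (Finset.univ : Finset (Finset (Fin n))) = (Finset.univ : Finset (Fin n)).powerset := by
    ext S; simp
  rw [huniv, ← h]
  by_cases hxy : x = y
  · subst hxy
    simp [sgn_mul_self, Finset.prod_const]
    norm_num
  · have : ∃ i, x i ≠ y i := by
      by_contra hc
      push_neg at hc
      exact hxy (funext hc)
    obtain ⟨i, hi⟩ := this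
    rw [if_neg hxy]
    apply Finset.prod_eq_zero (Finset.mem_univ i)
    rw [sgn_mul_sgn, if_neg hi]; ring

lemma parseval (n : ℕ) (f : (Fin n → Bool) → ℝ) :
    ∑ S : Finset (Fin n), (∑ x, (∏ i ∈ S, sgn (x i)) * f x) ^ 2 =
      2 ^ n * ∑ x, (f x) ^ 2 := by
  have h1 : ∀ S : Finset (Fin n), (∑ x, (∏ i ∈ S, sgn (x i)) * f x) ^ 2 =
      ∑ x, ∑ y, (f x * f y) * ∏ i ∈ S, (sgn (x i) * sgn (y i)) := by
    intro S
    rw [sq, Finset.sum_mul_sum]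
    refine Finset.sum_congr rfl fun x _ => Finset.sum_congr rfl fun y _ => ?_
    rw [Finset.prod_mul_distrib]; ring
  simp_rw [h1]
  rw [Finset.sum_comm]
  have h2 : ∀ x : Fin n → Bool, ∑ S : Finset (Fin n), ∑ y, (f x * f y) * ∏ i ∈ S, (sgn (x i) * sgn (y i)) = 2 ^ n * (f x) ^ 2 := by
    intro x
    rw [Finset.sum_comm]
    have h3 : ∀ y : Fin n → Bool, ∑ S : Finset (Fin n), (f x * f y) * ∏ i ∈ S, (sgn (x i) * sgn (y i)) = (f x * f y) * if x = y then (2:ℝ)^n else 0 := by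
      intro y
      rw [← Finset.mul_sum, sum_prod_sgn]
    simp_rw [h3, mul_ite, mul_zero]
    rw [Finset.sum_ite_eq (Finset.univ) x (fun y => f x * f y * 2 ^ n)]
    simp [sq]; ring
  simp_rw [h2]
  rw [← Finset.mul_sum]

lemma last_not_mem_map (d : ℕ) (s : Finset (Fin d)) :
    Fin.last d ∉ s.map Fin.castSuccEmb := by
  simp only [Finset.mem_map]
  rintro ⟨j, -, hj⟩
  exact absurd hj (by simp [Fin.castSuccEmb]; exact (Fin.castSucc_lt_last j).ne)

lemma prod_insert_last (d : ℕ) (t : Finset (Fin d)) (x : Fin (d+1) → Bool) :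
    (∏ i ∈ insert (Fin.last d) (t.map Fin.castSuccEmb), sgn (x i)) =
      ((∏ i ∈ t, sgn (x i.castSucc)) * sgn (x (Fin.last d))) := by
  rw [Finset.prod_insert (last_not_mem_map d t), Finset.prod_map]
  rw [mul_comm]; rfl

lemma phi_inj (d : ℕ) : Function.Injective (fun t : Finset (Fin d) => insert (Fin.last d) (t.map Fin.castSuccEmb)) := by
  intro t t' h
  have := congrArg (fun s => s.erase (Fin.last d)) h
  simp only [Finset.erase_insert (last_not_mem_map d t), Finset.erase_insert (last_not_mem_map d t')] at this
  exact Finset.map_injective _ this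

lemma card_ge (d k : ℕ) :
    (∑ j ∈ Finset.Icc 1 k, (d.choose j : ℕ)) ≤
      (Finset.univ.filter (fun t : Finset (Fin d) => t.card ≤ k)).card := by
  have hsub : (Finset.Icc 1 k).biUnion (fun j => (Finset.univ : Finset (Fin d)).powersetCard j)
      ⊆ Finset.univ.filter (fun t : Finset (Fin d) => t.card ≤ k) := by
    intro t ht
    simp only [Finset.mem_biUnion, Finset.mem_Icc, Finset.mem_powersetCard] at ht
    obtain ⟨j, ⟨-, hjk⟩, -, hcard⟩ := ht
    simp [hcard, hjk]
  have hdisj : ∀ i ∈ Finset.Icc 1 k, ∀ j ∈ Finset.Icc 1 k, i ≠ j →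
      Disjoint ((Finset.univ : Finset (Fin d)).powersetCard i) ((Finset.univ : Finset (Fin d)).powersetCard j) := by
    intro i _ j _ hij
    rw [Finset.disjoint_left]
    intro t hti htj
    rw [Finset.mem_powersetCard] at hti htj
    exact hij (hti.2 ▸ htj.2)
  calc (∑ j ∈ Finset.Icc 1 k, (d.choose j : ℕ))
      = ((Finset.Icc 1 k).biUnion (fun j => (Finset.univ : Finset (Fin d)).powersetCard j)).card := by
        rw [Finset.card_biUnion hdisj]
        refine Finset.sum_congr rfl fun j _ => ?_
        rw [Finset.card_powersetCard, Finset.card_univ, Fintype.card_fin]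
    _ ≤ _ := Finset.card_le_card hsub

/-- The `(∞→2)`-norm bound for `𝒬_{d,k,α}`: for every `f : {±1}^{d+1} → [-1,1]`,
the average over the family of `(E_Q f − E_U f)²` is at most `4α²/C(d,≤k)`. -/
theorem stmt_15 (d k : ℕ) (hd : 1 ≤ d) (hk : 1 ≤ k) (hkd : k ≤ d)
    (α : ℝ) (hα0 : 0 ≤ α) (hα2 : α ≤ 1 / 2)
    (f : (Fin (d + 1) → Bool) → ℝ) (hf : ∀ x, |f x| ≤ 1) :
    (1 / (2 * ((Finset.univ.filter
        (fun t : Finset (Fin d) => t.card ≤ k)).card : ℝ))) *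
      ∑ t ∈ Finset.univ.filter (fun t : Finset (Fin d) => t.card ≤ k),
        ∑ b : Bool,
          (∑ x, Qd d t b α x * f x - ∑ x, (1 / 2 ^ (d + 1) : ℝ) * f x) ^ 2 ≤
      4 * α ^ 2 / (∑ j ∈ Finset.Icc 1 k, (d.choose j : ℝ)) := by
  set 𝒯 := Finset.univ.filter (fun t : Finset (Fin d) => t.card ≤ k) with h𝒯
  set N : ℝ := (𝒯.card : ℝ) with hN
  set M : ℝ := ∑ j ∈ Finset.Icc 1 k, (d.choose j : ℝ) with hM
  set B : Finset (Fin d) → ℝ :=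
    fun t => ∑ x, ((∏ i ∈ t, sgn (x i.castSucc)) * sgn (x (Fin.last d))) * f x with hB
  set C : Finset (Fin (d+1)) → ℝ := fun S => ∑ x, (∏ i ∈ S, sgn (x i)) * f x with hC
  -- M > 0
  have hMpos : (0:ℝ) < M := by
    rw [hM]
    have h1 : ((d.choose 1 : ℕ) : ℝ) ≤ ∑ j ∈ Finset.Icc 1 k, (d.choose j : ℝ) := by
      refine Finset.single_le_sum (f := fun j => ((d.choose j : ℕ) : ℝ)) (fun j _ => by positivity) ?_
      simp [Finset.mem_Icc, hk]
    have : (0:ℝ) < (d.choose 1 : ℕ) := by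
      simp [Nat.choose_one_right]
      omega
    linarith
  have hMN : M ≤ N := by
    rw [hM, hN]
    have := card_ge d k
    calc M = ((∑ j ∈ Finset.Icc 1 k, (d.choose j : ℕ) : ℕ) : ℝ) := by
          rw [hM]; push_cast; ring
      _ ≤ (𝒯.card : ℝ) := by exact_mod_cast this
  have hNpos : (0:ℝ) < N := lt_of_lt_of_le hMpos hMN
  -- Step 1: rewrite the inner difference
  have hdiff : ∀ t : Finset (Fin d), ∀ b : Bool,
      (∑ x, Qd d t b α x * f x - ∑ x, (1 / 2 ^ (d + 1) : ℝ) * f x)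
        = (2 * α * sgn b / 2 ^ (d+1)) * B t := by
    intro t b
    rw [← Finset.sum_sub_distrib, hB, Finset.mul_sum]
    refine Finset.sum_congr rfl fun x _ => ?_
    unfold Qd
    field_simp
    ring
  -- Step 2: sum over b
  have hbsum : ∀ t : Finset (Fin d),
      (∑ b : Bool, ((2 * α * sgn b / 2 ^ (d+1)) * B t) ^ 2)
        = 8 * α ^ 2 / ((2:ℝ) ^ (d+1)) ^ 2 * (B t) ^ 2 := by
    intro t
    rw [Fintype.sum_bool]
    simp only [sgn]
    norm_num
    field_simp
    ring
  -- Step 3: bound the sum of B t ^2 by Parseval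
  have hBsq : ∑ t ∈ 𝒯, (B t) ^ 2 ≤ ((2:ℝ) ^ (d+1)) ^ 2 := by
    have hBeq : ∀ t : Finset (Fin d), B t = C (insert (Fin.last d) (t.map Fin.castSuccEmb)) := by
      intro t
      rw [hB, hC]
      refine Finset.sum_congr rfl fun x _ => ?_
      rw [prod_insert_last]
    calc ∑ t ∈ 𝒯, (B t) ^ 2
        = ∑ S ∈ 𝒯.image (fun t => insert (Fin.last d) (t.map Fin.castSuccEmb)), (C S) ^ 2 := by
          rw [Finset.sum_image (fun a _ b _ h => phi_inj d h)]
          exact Finset.sum_congr rfl fun t _ => by rw [hBeq]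
      _ ≤ ∑ S : Finset (Fin (d+1)), (C S) ^ 2 := by
          refine Finset.sum_le_sum_of_subset_of_nonneg (Finset.subset_univ _)
            (fun S _ _ => sq_nonneg _)
      _ = 2 ^ (d+1) * ∑ x, (f x) ^ 2 := parseval (d+1) f
      _ ≤ 2 ^ (d+1) * 2 ^ (d+1) := by
          have : ∑ x : Fin (d+1) → Bool, (f x) ^ 2 ≤ ∑ x : Fin (d+1) → Bool, (1:ℝ) := by
            refine Finset.sum_le_sum fun x _ => ?_
            have := hf x
            nlinarith [abs_nonneg (f x), sq_abs (f x)]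
          have hcard : ∑ x : Fin (d+1) → Bool, (1:ℝ) = 2 ^ (d+1) := by
            simp [Finset.card_univ]
          nlinarith [this, hcard, pow_pos (show (0:ℝ) < 2 by norm_num) (d+1)]
      _ = ((2:ℝ) ^ (d+1)) ^ 2 := by ring
  -- Put everything together
  have hmain : (1 / (2 * N)) *
      ∑ t ∈ 𝒯, ∑ b : Bool,
        (∑ x, Qd d t b α x * f x - ∑ x, (1 / 2 ^ (d + 1) : ℝ) * f x) ^ 2
      ≤ 4 * α ^ 2 / N := by
    have hrw : ∑ t ∈ 𝒯, ∑ b : Bool,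
        (∑ x, Qd d t b α x * f x - ∑ x, (1 / 2 ^ (d + 1) : ℝ) * f x) ^ 2
        = 8 * α ^ 2 / ((2:ℝ) ^ (d+1)) ^ 2 * ∑ t ∈ 𝒯, (B t) ^ 2 := by
      rw [Finset.mul_sum]
      refine Finset.sum_congr rfl fun t _ => ?_
      rw [← hbsum t]
      exact Finset.sum_congr rfl fun b _ => by rw [hdiff t b]
    rw [hrw]
    have hc : (0:ℝ) ≤ 8 * α ^ 2 / ((2:ℝ) ^ (d+1)) ^ 2 := by positivity
    have h1 : 8 * α ^ 2 / ((2:ℝ) ^ (d+1)) ^ 2 * ∑ t ∈ 𝒯, (B t) ^ 2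
        ≤ 8 * α ^ 2 / ((2:ℝ) ^ (d+1)) ^ 2 * ((2:ℝ) ^ (d+1)) ^ 2 :=
      mul_le_mul_of_nonneg_left hBsq hc
    have h2 : 8 * α ^ 2 / ((2:ℝ) ^ (d+1)) ^ 2 * ((2:ℝ) ^ (d+1)) ^ 2 = 8 * α ^ 2 := by
      field_simp
    have h3 : (0:ℝ) < 1 / (2 * N) := by positivity
    calc (1 / (2 * N)) * (8 * α ^ 2 / ((2:ℝ) ^ (d+1)) ^ 2 * ∑ t ∈ 𝒯, (B t) ^ 2)
        ≤ (1 / (2 * N)) * (8 * α ^ 2 / ((2:ℝ) ^ (d+1)) ^ 2 * ((2:ℝ) ^ (d+1)) ^ 2) :=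
          mul_le_mul_of_nonneg_left h1 (le_of_lt h3)
      _ = 4 * α ^ 2 / N := by rw [h2]; field_simp; ring
  calc (1 / (2 * N)) *
      ∑ t ∈ 𝒯, ∑ b : Bool,
        (∑ x, Qd d t b α x * f x - ∑ x, (1 / 2 ^ (d + 1) : ℝ) * f x) ^ 2
      ≤ 4 * α ^ 2 / N := hmain
    _ ≤ 4 * α ^ 2 / M := by
        apply div_le_div_of_nonneg_left _ hMpos hMN
        positivity
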